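/- The Nerve Theorem for convex covers: if U_1, ..., U_m are convex open subsets of R^N covering X = ⋃ U_i, then X is homotopy equivalent to the geometric realization of the nerve N(U). -/

import Mathlib

/-- The nerve of a finite cover `U : Fin m → Set X`: the abstract simplicial
complex on vertex set `Fin m` whose simplices are the nonempty index sets `J`
with `⋂_{j ∈ J} U_j ≠ ∅`. -/
def nerve {m : ℕ} {X : Type*} (U : Fin m → Set X) : Set (Finset (Fin m)) :=
  {J | J.Nonempty ∧ (⋂ j ∈ J, U j).Nonempty}

/-- A geometric realization of the nerve of `U : Fin m → Set X` inside `ℝ^m`: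
the union, over the simplices `J` of the nerve, of the convex hulls of the
standard basis vectors `{e_j : j ∈ J}`. -/
def nerveRealization {m : ℕ} {X : Type*} (U : Fin m → Set X) :
    Set (EuclideanSpace ℝ (Fin m)) :=
  ⋃ J ∈ nerve U, convexHull ℝ ((fun j => EuclideanSpace.single j (1 : ℝ)) '' J)

/-! Choose continuous `φ i ≥ 0` with support exactly `U i` (open sets of a metric space are
cozero sets); normalising `(φ i x)ᵢ` gives `F : ⋃ U i → |N(U)|`. Conversely, send the
barycentre of each simplex `J` of `N(U)` to a point `p J ∈ ⋂ j ∈ J, U j` and extend affinely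
over the barycentric subdivision: `G t` is then a convex combination of points `p J` with `J`
containing every index at which `t` is maximal, so `G t ∈ U i` for such `i`. For the largest
coordinate `i` of `F x` both `x` and `G (F x)` lie in the convex set `U i`, whence
`G ∘ F ≃ id`. The points `t` and `F (G t)` need not lie in a common simplex, but both are
joined by segments inside `|N(U)|` to the normalisation of `(t i * φ i (G t))ᵢ`, whose support
lies in that of `t` and in `{i | G t ∈ U i}`; hence `F ∘ G ≃ id`. -/

open Finset

theorem Continuous.finset_fold_max {α β L : Type*} [TopologicalSpace α] [LinearOrder L]
    [TopologicalSpace L] [OrderClosedTopology L] (s : Finset β) (b : L) {f : β → α → L}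
    (hf : ∀ i ∈ s, Continuous (f i)) : Continuous fun x => s.fold max b (f · x) := by
  classical
  induction s using Finset.induction_on with
  | empty => exact continuous_const
  | insert i s hi ih =>
    simp only [fold_insert hi]
    exact (hf i (mem_insert_self i s)).max (ih fun j hj => hf j (mem_insert_of_mem hj))

theorem ContinuousMap.Homotopic.of_forall_segment_subset {Y E : Type*} [TopologicalSpace Y]
    [AddCommGroup E] [TopologicalSpace E] [IsTopologicalAddGroup E] [Module ℝ E]
    [ContinuousSMul ℝ E] {S : Set E} {f g : C(Y, S)}
    (h : ∀ y, segment ℝ (f y : E) (g y) ⊆ S) : f.Homotopic g := by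
  let H := ContinuousMap.Homotopy.affine (.comp ⟨Subtype.val, continuous_subtype_val⟩ f)
    (.comp ⟨Subtype.val, continuous_subtype_val⟩ g)
  exact ⟨{ toFun p := ⟨H p, h p.2 <| Path.range_segment (f p.2 : E) (g p.2) ▸
              Set.mem_range_self p.1⟩
           continuous_toFun := H.continuous.subtype_mk _
           map_zero_left y := Subtype.ext (H.apply_zero y)
           map_one_left y := Subtype.ext (H.apply_one y) }⟩

theorem IsOpen.exists_continuousMap_nonneg_support_eq {X : Type*} [TopologicalSpace X]
    [PerfectlyNormalSpace X] {s : Set X} (hs : IsOpen s) :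
    ∃ f : C(X, ℝ), (∀ x, 0 ≤ f x) ∧ Function.support f = s := by
  obtain ⟨f, hf, hf01⟩ :=
    perfectlyNormalSpace_iff_forall_isClosed_preimage_zero.1 ‹_› sᶜ hs.isClosed_compl
  exact ⟨f, fun x => (hf01 x).1, by rw [← compl_compl s, hf]; rfl⟩

theorem exists_pos_forall_le_of_mem_stdSimplex {ι : Type*} [Fintype ι] {t : ι → ℝ}
    (ht : t ∈ stdSimplex ℝ ι) : ∃ i, 0 < t i ∧ ∀ j, t j ≤ t i := by
  obtain ⟨i, -, hi⟩ := exists_max_image univ t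
    (nonempty_of_sum_ne_zero (ht.2.trans_ne one_ne_zero))
  refine ⟨i, ?_, fun j => hi j (mem_univ j)⟩
  by_contra! h
  have := sum_le_sum fun j (_ : j ∈ univ) => (hi j (mem_univ j)).trans h
  norm_num [ht.2] at this

theorem mem_convexHull_single_iff {ι : Type*} [Fintype ι] [DecidableEq ι] {J : Finset ι}
    {t : EuclideanSpace ℝ ι} :
    t ∈ convexHull ℝ ((fun j => EuclideanSpace.single j (1 : ℝ)) '' J) ↔
      t.ofLp ∈ stdSimplex ℝ ι ∧ ∀ i ∉ J, t i = 0 := by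
  constructor
  · refine fun ht => convexHull_min
      (t := {w : EuclideanSpace ℝ ι | w.ofLp ∈ stdSimplex ℝ ι ∧ ∀ i ∉ J, w i = 0}) ?_ ?_ ht
    · rintro _ ⟨j, hj, rfl⟩
      refine ⟨⟨fun i => ?_, by simp⟩, fun i hi => ?_⟩
      · by_cases h : i = j <;> simp [h]
      · simp [show i ≠ j by rintro rfl; exact hi hj]
    · rintro x ⟨⟨hx0, hx1⟩, hxJ⟩ y ⟨⟨hy0, hy1⟩, hyJ⟩ a b ha hb hab
      refine ⟨⟨fun i => ?_, ?_⟩, fun i hi => ?_⟩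
      · simpa using add_nonneg (mul_nonneg ha (hx0 i)) (mul_nonneg hb (hy0 i))
      · simp [sum_add_distrib, ← mul_sum, hx1, hy1, hab]
      · simp [hxJ i hi, hyJ i hi]
  · rintro ⟨⟨ht0, ht1⟩, htJ⟩
    have hsum : ∑ j ∈ J, t j = 1 := by
      rw [← ht1]; exact sum_subset (subset_univ J) fun i _ hi => htJ i hi
    have ht : ∑ j ∈ J, t j • EuclideanSpace.single j (1 : ℝ) = t := by
      rw [sum_subset (subset_univ J) fun i _ hi => by simp [htJ i hi]]
      simpa using (EuclideanSpace.basisFun ι ℝ).sum_repr t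
    rw [← ht]
    exact (convex_convexHull ℝ _).sum_mem (fun j _ => ht0 j) hsum
      fun j hj => subset_convexHull ℝ _ ⟨j, hj, rfl⟩

section Realization

variable {X : Type*} {m : ℕ} {U : Fin m → Set X}

theorem segment_subset_nerveRealization {u v : EuclideanSpace ℝ (Fin m)} {x : X}
    (hu : u.ofLp ∈ stdSimplex ℝ (Fin m)) (hv : v.ofLp ∈ stdSimplex ℝ (Fin m))
    (hux : ∀ i, u i ≠ 0 → x ∈ U i) (hvx : ∀ i, v i ≠ 0 → x ∈ U i) :
    segment ℝ u v ⊆ nerveRealization U := by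
  classical
  set J := univ.filter (x ∈ U ·)
  obtain ⟨i, -, hi⟩ := exists_ne_zero_of_sum_ne_zero (hu.2.trans_ne one_ne_zero)
  have hJ : J ∈ nerve U := ⟨⟨i, by simpa [J] using hux i hi⟩, x, by simp [J]⟩
  have hface : ∀ w : EuclideanSpace ℝ (Fin m), w.ofLp ∈ stdSimplex ℝ (Fin m) →
      (∀ i, w i ≠ 0 → x ∈ U i) →
      w ∈ convexHull ℝ ((fun j => EuclideanSpace.single j (1 : ℝ)) '' J) :=
    fun w hw hwx => mem_convexHull_single_iff.2
      ⟨hw, fun i hi => by_contra fun h => hi (by simpa [J] using hwx i h)⟩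
  exact fun w hw => Set.mem_iUnion₂.2
    ⟨J, hJ, (convex_convexHull ℝ _).segment_subset (hface u hu hux) (hface v hv hvx) hw⟩

theorem mem_nerveRealization_iff {t : EuclideanSpace ℝ (Fin m)} :
    t ∈ nerveRealization U ↔
      t.ofLp ∈ stdSimplex ℝ (Fin m) ∧ ∃ x, ∀ i, t i ≠ 0 → x ∈ U i := by
  constructor
  · intro ht
    obtain ⟨J, ⟨-, x, hx⟩, htJ⟩ := Set.mem_iUnion₂.1 ht
    obtain ⟨hsimplex, htJ⟩ := mem_convexHull_single_iff.1 htJ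
    exact ⟨hsimplex, x, fun i hi => Set.mem_iInter₂.1 hx i (by_contra fun h => hi (htJ i h))⟩
  · rintro ⟨ht, x, hx⟩
    exact segment_subset_nerveRealization ht ht hx hx (left_mem_segment ℝ t t)

end Realization

section SimplexPoint

variable {ι : Type*} [Fintype ι]

noncomputable def simplexPoint (v : ι → ℝ) : EuclideanSpace ℝ ι :=
  WithLp.toLp 2 fun i => v i / ∑ j, v j

@[simp]
theorem simplexPoint_apply (v : ι → ℝ) (i : ι) : simplexPoint v i = v i / ∑ j, v j := rfl

theorem simplexPoint_mem_stdSimplex {v : ι → ℝ} (hv0 : ∀ i, 0 ≤ v i) (hv : 0 < ∑ i, v i) :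
    (simplexPoint v).ofLp ∈ stdSimplex ℝ ι :=
  ⟨fun i => div_nonneg (hv0 i) hv.le, by simp [← sum_div, hv.ne']⟩

theorem simplexPoint_ne_zero_iff {v : ι → ℝ} (hv : 0 < ∑ i, v i) {i : ι} :
    simplexPoint v i ≠ 0 ↔ v i ≠ 0 := by
  simp [hv.ne']

theorem Continuous.simplexPoint {Y : Type*} [TopologicalSpace Y] {f : Y → ι → ℝ}
    (hf : Continuous f) (h : ∀ y, ∑ i, f y i ≠ 0) :
    Continuous fun y => _root_.simplexPoint (f y) :=
  (PiLp.continuous_toLp 2 _).comp <| continuous_pi fun i =>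
    ((continuous_apply i).comp hf).div
      (continuous_finsetSum _ fun j _ => (continuous_apply j).comp hf) h

theorem simplexPoint_mem_nerveRealization {X : Type*} {m : ℕ} {U : Fin m → Set X}
    {v : Fin m → ℝ} (hv0 : ∀ i, 0 ≤ v i) (hv : 0 < ∑ i, v i) {x : X}
    (hx : ∀ i, v i ≠ 0 → x ∈ U i) : simplexPoint v ∈ nerveRealization U :=
  mem_nerveRealization_iff.2 ⟨simplexPoint_mem_stdSimplex hv0 hv, x,
    fun i hi => hx i ((simplexPoint_ne_zero_iff hv).1 hi)⟩

end SimplexPoint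

section Subdivision

open MeasureTheory

variable {ι : Type*} [Fintype ι] [DecidableEq ι]

def levelInterval (t : ι → ℝ) (J : Finset ι) : Set ℝ :=
  Set.Ico (Jᶜ.fold max 0 t) (if h : J.Nonempty then J.inf' h t else 0)

theorem mem_levelInterval {t : ι → ℝ} {J : Finset ι} {θ : ℝ} :
    θ ∈ levelInterval t J ↔ 0 ≤ θ ∧ J.Nonempty ∧ ∀ i, i ∈ J ↔ θ < t i := by
  rw [levelInterval, Set.mem_Ico, fold_max_le]
  by_cases hJ : J.Nonempty
  · rw [dif_pos hJ, lt_inf'_iff]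
    simp only [mem_compl, hJ, true_and]
    constructor
    · rintro ⟨⟨h0, hlow⟩, hup⟩
      exact ⟨h0, fun i => ⟨hup i, fun h => by_contra fun hi => (hlow i hi).not_gt h⟩⟩
    · rintro ⟨h0, h⟩
      exact ⟨⟨h0, fun i hi => not_lt.1 fun h' => hi ((h i).2 h')⟩, fun i hi => (h i).1 hi⟩
  · rw [dif_neg hJ]
    simp only [hJ, false_and, and_false, iff_false, not_and]
    exact fun ⟨h0, _⟩ => h0.not_gt

theorem pairwiseDisjoint_levelInterval (t : ι → ℝ) :
    (Set.univ : Set (Finset ι)).PairwiseDisjoint (levelInterval t) := by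
  refine fun J _ K _ hJK => Set.disjoint_left.2 fun θ hJ hK => hJK ?_
  ext i
  rw [(mem_levelInterval.1 hJ).2.2 i, (mem_levelInterval.1 hK).2.2 i]

theorem biUnion_levelInterval (t : ι → ℝ) (i : ι) :
    ⋃ J ∈ univ.filter (i ∈ ·), levelInterval t J = Set.Ico 0 (t i) := by
  ext θ
  simp only [Set.mem_iUnion₂, mem_filter, mem_univ, true_and, mem_levelInterval, Set.mem_Ico]
  constructor
  · rintro ⟨J, hi, h0, -, hJ⟩
    exact ⟨h0, (hJ i).1 hi⟩
  · rintro ⟨h0, hθ⟩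
    exact ⟨univ.filter (θ < t ·), by simpa using hθ, h0, ⟨i, by simpa using hθ⟩, by simp⟩

/-- The barycentric coordinate of `t ∈ Δ` at the barycentre of the face `J` in the barycentric
subdivision: if `t σ₁ ≥ t σ₂ ≥ ⋯` and `J = {σ₁, …, σₖ}`, it is `k * (t σₖ - t σₖ₊₁)`. -/
noncomputable def subdivisionWeight (t : ι → ℝ) (J : Finset ι) : ℝ :=
  #J * volume.real (levelInterval t J)

theorem subdivisionWeight_nonneg (t : ι → ℝ) (J : Finset ι) : 0 ≤ subdivisionWeight t J :=
  mul_nonneg (Nat.cast_nonneg _) measureReal_nonneg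

theorem nonempty_levelInterval_of_subdivisionWeight_ne_zero {t : ι → ℝ} {J : Finset ι}
    (h : subdivisionWeight t J ≠ 0) : (levelInterval t J).Nonempty :=
  Set.nonempty_iff_ne_empty.2 fun he => h (by simp [subdivisionWeight, he])

theorem sum_subdivisionWeight {t : ι → ℝ} (ht : ∀ i, 0 ≤ t i) :
    ∑ J, subdivisionWeight t J = ∑ i, t i := by
  have hcoord (i : ι) : ∑ J ∈ univ.filter (i ∈ ·), volume.real (levelInterval t J) = t i := by
    rw [← measureReal_biUnion_finset
      ((pairwiseDisjoint_levelInterval t).subset (Set.subset_univ _))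
      (fun J _ => measurableSet_Ico) fun J _ => measure_Ico_lt_top.ne,
      biUnion_levelInterval, Real.volume_real_Ico_of_le (ht i), sub_zero]
  simp only [subdivisionWeight, ← hcoord, sum_filter]
  rw [sum_comm]
  refine sum_congr rfl fun J _ => ?_
  rw [sum_ite_mem, univ_inter, sum_const, nsmul_eq_mul]

theorem continuous_subdivisionWeight (J : Finset ι) :
    Continuous fun t : ι → ℝ => subdivisionWeight t J := by
  simp only [subdivisionWeight, levelInterval, Real.volume_real_Ico]
  refine continuous_const.mul ((Continuous.sub ?_ ?_).max continuous_const)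
  · split_ifs with hJ
    · exact Continuous.finset_inf'_apply hJ fun i _ => continuous_apply i
    · exact continuous_const
  · exact Continuous.finset_fold_max _ _ fun i _ => continuous_apply i

end Subdivision

section NerveMaps

variable {m : ℕ}

section ToSpace

variable {E : Type*} [AddCommGroup E] {U : Fin m → Set E}

open scoped Classical in
/-- The junk value `0` is taken only when `J ∉ nerve U`. -/
noncomputable def nervePoint (U : Fin m → Set E) (J : Finset (Fin m)) : E :=
  if h : (⋂ j ∈ J, U j).Nonempty then h.some else 0

theorem nervePoint_mem {J : Finset (Fin m)} {x : E} (hx : ∀ j ∈ J, x ∈ U j) {j : Fin m}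
    (hj : j ∈ J) : nervePoint U J ∈ U j := by
  have h : (⋂ j ∈ J, U j).Nonempty := ⟨x, Set.mem_iInter₂.2 hx⟩
  rw [nervePoint, dif_pos h]
  exact Set.mem_iInter₂.1 h.some_mem j hj

variable [Module ℝ E]

noncomputable def nerveToSpace (U : Fin m → Set E) (t : EuclideanSpace ℝ (Fin m)) : E :=
  ∑ J, subdivisionWeight t.ofLp J • nervePoint U J

theorem nerveToSpace_mem (hconv : ∀ i, Convex ℝ (U i)) {t : EuclideanSpace ℝ (Fin m)}
    (ht : t ∈ nerveRealization U) {i : Fin m} (hi : ∀ j, t j ≤ t i) :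
    nerveToSpace U t ∈ U i := by
  obtain ⟨⟨ht0, ht1⟩, x, hx⟩ := mem_nerveRealization_iff.1 ht
  have hpoint (J : Finset (Fin m)) (hJ : subdivisionWeight t.ofLp J ≠ 0) :
      nervePoint U J ∈ U i := by
    obtain ⟨θ, hθ⟩ := nonempty_levelInterval_of_subdivisionWeight_ne_zero hJ
    obtain ⟨hθ0, ⟨j, hj⟩, hJ⟩ := mem_levelInterval.1 hθ
    exact nervePoint_mem (fun k hk => hx k (hθ0.trans_lt ((hJ k).1 hk)).ne')
      ((hJ i).2 (((hJ j).1 hj).trans_le (hi j)))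
  simpa only [nerveToSpace, finsum_eq_sum_of_fintype] using
    (hconv i).finsum_mem (fun J => subdivisionWeight_nonneg _ J)
      (by rw [finsum_eq_sum_of_fintype, sum_subdivisionWeight ht0, ht1]) hpoint

theorem nerveToSpace_mem_iUnion (hconv : ∀ i, Convex ℝ (U i)) {t : EuclideanSpace ℝ (Fin m)}
    (ht : t ∈ nerveRealization U) : nerveToSpace U t ∈ ⋃ i, U i :=
  have ⟨i, _, hi⟩ := exists_pos_forall_le_of_mem_stdSimplex (mem_nerveRealization_iff.1 ht).1
  Set.mem_iUnion.2 ⟨i, nerveToSpace_mem hconv ht hi⟩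

theorem continuous_nerveToSpace [TopologicalSpace E] [ContinuousAdd E] [ContinuousSMul ℝ E]
    (U : Fin m → Set E) : Continuous (nerveToSpace U) :=
  continuous_finsetSum _ fun J _ =>
    ((continuous_subdivisionWeight J).comp (PiLp.continuous_ofLp 2 _)).smul continuous_const

noncomputable def nerveToCover [TopologicalSpace E] [ContinuousAdd E] [ContinuousSMul ℝ E]
    (hconv : ∀ i, Convex ℝ (U i)) :
    C(nerveRealization U, ⋃ i, U i) where
  toFun t := ⟨nerveToSpace U t, nerveToSpace_mem_iUnion hconv t.2⟩
  continuous_toFun := ((continuous_nerveToSpace U).comp continuous_subtype_val).subtype_mk _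

end ToSpace

section ToNerve

variable {X : Type*} [TopologicalSpace X] {U : Fin m → Set X} {φ : Fin m → C(X, ℝ)}

theorem sum_pos_of_support_eq (hφ0 : ∀ i x, 0 ≤ φ i x) (hφ : ∀ i, Function.support (φ i) = U i)
    {x : X} (hx : x ∈ ⋃ i, U i) : 0 < ∑ i, φ i x := by
  obtain ⟨i, hi⟩ := Set.mem_iUnion.1 hx
  rw [← hφ i] at hi
  exact sum_pos' (fun j _ => hφ0 j x) ⟨i, mem_univ i, (hφ0 i x).lt_of_ne' hi⟩

noncomputable def coverToNerve (φ : Fin m → C(X, ℝ)) (hφ0 : ∀ i x, 0 ≤ φ i x)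
    (hφ : ∀ i, Function.support (φ i) = U i) : C(⋃ i, U i, nerveRealization U) where
  toFun x := ⟨simplexPoint fun i => φ i x, simplexPoint_mem_nerveRealization
    (fun i => hφ0 i x) (sum_pos_of_support_eq hφ0 hφ x.2)
    fun i hi => hφ i ▸ Function.mem_support.2 hi⟩
  continuous_toFun := Continuous.subtype_mk (Continuous.simplexPoint
    (continuous_pi fun i => (φ i).continuous.comp continuous_subtype_val)
    fun x => (sum_pos_of_support_eq hφ0 hφ x.2).ne') _

end ToNerve

section Homotopies

variable {E : Type*} [AddCommGroup E] [Module ℝ E] [TopologicalSpace E] {U : Fin m → Set E}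
  {φ : Fin m → C(E, ℝ)}

theorem sum_mul_nerveToSpace_pos (hconv : ∀ i, Convex ℝ (U i)) (hφ0 : ∀ i x, 0 ≤ φ i x)
    (hφ : ∀ i, Function.support (φ i) = U i) {t : EuclideanSpace ℝ (Fin m)}
    (ht : t ∈ nerveRealization U) : 0 < ∑ i, t i * φ i (nerveToSpace U t) := by
  obtain ⟨hsimplex, -⟩ := mem_nerveRealization_iff.1 ht
  obtain ⟨i, hti, hi⟩ := exists_pos_forall_le_of_mem_stdSimplex hsimplex
  have hG : nerveToSpace U t ∈ Function.support (φ i) := hφ i ▸ nerveToSpace_mem hconv ht hi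
  exact sum_pos' (fun j _ => mul_nonneg (hsimplex.1 j) (hφ0 j _))
    ⟨i, mem_univ i, mul_pos hti ((hφ0 i _).lt_of_ne' hG)⟩

noncomputable def nerveHadamard [ContinuousAdd E] [ContinuousSMul ℝ E]
    (hconv : ∀ i, Convex ℝ (U i)) (hφ0 : ∀ i x, 0 ≤ φ i x)
    (hφ : ∀ i, Function.support (φ i) = U i) : C(nerveRealization U, nerveRealization U) where
  toFun t := ⟨simplexPoint fun i => t.1 i * φ i (nerveToSpace U t),
    have ⟨⟨ht0, _⟩, x, hx⟩ := mem_nerveRealization_iff.1 t.2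
    simplexPoint_mem_nerveRealization (fun i => mul_nonneg (ht0 i) (hφ0 i _))
      (sum_mul_nerveToSpace_pos hconv hφ0 hφ t.2) fun i hi => hx i (left_ne_zero_of_mul hi)⟩
  continuous_toFun := by
    refine Continuous.subtype_mk (Continuous.simplexPoint (continuous_pi fun i => ?_)
      fun t => (sum_mul_nerveToSpace_pos hconv hφ0 hφ t.2).ne') _
    exact ((continuous_apply i).comp
      ((PiLp.continuous_ofLp 2 _).comp continuous_subtype_val)).mul
      ((φ i).continuous.comp ((continuous_nerveToSpace U).comp continuous_subtype_val))

variable [IsTopologicalAddGroup E] [ContinuousSMul ℝ E]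

theorem nerveToCover_comp_coverToNerve_homotopic (hconv : ∀ i, Convex ℝ (U i))
    (hφ0 : ∀ i x, 0 ≤ φ i x) (hφ : ∀ i, Function.support (φ i) = U i) :
    ((nerveToCover hconv).comp (coverToNerve φ hφ0 hφ)).Homotopic (ContinuousMap.id _) := by
  refine ContinuousMap.Homotopic.of_forall_segment_subset fun x => ?_
  set t := coverToNerve φ hφ0 hφ x
  obtain ⟨i, hti, hi⟩ :=
    exists_pos_forall_le_of_mem_stdSimplex (mem_nerveRealization_iff.1 t.2).1
  have hx : (x : E) ∈ U i := by
    rw [← hφ i]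
    exact (simplexPoint_ne_zero_iff (sum_pos_of_support_eq hφ0 hφ x.2)).1 hti.ne'
  exact ((hconv i).segment_subset (nerveToSpace_mem hconv t.2 hi) hx).trans
    (Set.subset_iUnion U i)

theorem coverToNerve_comp_nerveToCover_homotopic (hconv : ∀ i, Convex ℝ (U i))
    (hφ0 : ∀ i x, 0 ≤ φ i x) (hφ : ∀ i, Function.support (φ i) = U i) :
    ((coverToNerve φ hφ0 hφ).comp (nerveToCover hconv)).Homotopic (ContinuousMap.id _) := by
  set R := nerveHadamard hconv hφ0 hφ
  have hR (t : nerveRealization U) := mem_nerveRealization_iff.1 (R t).2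
  have hpos (t : nerveRealization U) := sum_mul_nerveToSpace_pos hconv hφ0 hφ t.2
  have hid : (ContinuousMap.id _).Homotopic R := .of_forall_segment_subset fun t => by
    obtain ⟨ht, x, hx⟩ := mem_nerveRealization_iff.1 t.2
    exact segment_subset_nerveRealization ht (hR t).1 hx fun i hi =>
      hx i (left_ne_zero_of_mul ((simplexPoint_ne_zero_iff (hpos t)).1 hi))
  have hFG : R.Homotopic ((coverToNerve φ hφ0 hφ).comp (nerveToCover hconv)) :=
    .of_forall_segment_subset fun t => by
      obtain ⟨hFG, -⟩ :=
        mem_nerveRealization_iff.1 (coverToNerve φ hφ0 hφ (nerveToCover hconv t)).2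
      refine segment_subset_nerveRealization (hR t).1 hFG (x := nerveToSpace U t)
        (fun i hi => ?_) fun i hi => ?_
      · exact hφ i ▸ right_ne_zero_of_mul ((simplexPoint_ne_zero_iff (hpos t)).1 hi)
      · exact hφ i ▸ (simplexPoint_ne_zero_iff (sum_pos_of_support_eq hφ0 hφ
          (nerveToCover hconv t).2)).1 hi
  exact (hid.trans hFG).symm

end Homotopies

end NerveMaps

/-- The Nerve Theorem for convex covers: if `U_1, …, U_m` are convex open
subsets of `ℝ^N` covering `X = ⋃ U_i`, then `X` is homotopy equivalent to the
geometric realization of the nerve `N(U)`. -/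
theorem nerve_theorem_of_convex_open {N m : ℕ}
    (U : Fin m → Set (EuclideanSpace ℝ (Fin N)))
    (hconv : ∀ i, Convex ℝ (U i)) (hopen : ∀ i, IsOpen (U i)) :
    Nonempty
      (ContinuousMap.HomotopyEquiv
        (⋃ i, U i : Set (EuclideanSpace ℝ (Fin N)))
        (nerveRealization U)) := by
  choose φ hφ0 hφ using fun i => (hopen i).exists_continuousMap_nonneg_support_eq
  exact ⟨⟨coverToNerve φ hφ0 hφ, nerveToCover hconv,
    nerveToCover_comp_coverToNerve_homotopic hconv hφ0 hφ,
    coverToNerve_comp_nerveToCover_homotopic hconv hφ0 hφ⟩⟩
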